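/- arXiv:1201.0682 — 2 statements merged into one kernel-verified Lean document; each statement's English description precedes it below -/
import Mathlib

section
/- Let φ and ψ be LTL formulae such that φ implies ψ (for every alphabet Σ and every w ∈ Σ^ω, w ⊨ φ implies w ⊨ ψ), and let γ be an alternating LTL formula. Then (ψ R γ) R φ ≡ γ R φ, i.e., for every alphabet Σ and every infinite word w ∈ Σ^ω, w ⊨ (ψ R γ) R φ if and only if w ⊨ γ R φ. -/
/-- Syntax of LTL formulae over atomic propositions `AP`. -/
inductive LTL (AP : Type) : Type
  | tt    : LTL AP
  | atom  : AP → LTL AP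
  | not   : LTL AP → LTL AP
  | or    : LTL AP → LTL AP → LTL AP
  | and   : LTL AP → LTL AP → LTL AP
  | next  : LTL AP → LTL AP
  | untl  : LTL AP → LTL AP → LTL AP

namespace LTL

/-- Derived operator `F` (eventually). -/
def F {AP : Type} (φ : LTL AP) : LTL AP := untl tt φ

/-- Derived operator `G` (always). -/
def G {AP : Type} (φ : LTL AP) : LTL AP := not (F (not φ))

/-- Derived operator `R` (release). -/
def R {AP : Type} (φ ψ : LTL AP) : LTL AP := not (untl (not φ) (not ψ))

end LTL

/-- The `k`-th suffix of an infinite word. -/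
def suffix {AP : Type} (w : ℕ → Set AP) (k : ℕ) : ℕ → Set AP :=
  fun i => w (i + k)

/-- Concatenation of a finite word `u` with an infinite word `w`. -/
def cat {AP : Type} (u : List (Set AP)) (w : ℕ → Set AP) : ℕ → Set AP :=
  fun i => if h : i < u.length then u.get ⟨i, h⟩ else w (i - u.length)

/-- Satisfaction relation `w ⊨ φ` of LTL over infinite words `w : ℕ → Set AP`. -/
def Sat {AP : Type} : LTL AP → (ℕ → Set AP) → Prop
  | .tt, _ => True
  | .atom a, w => a ∈ w 0
  | .not φ, w => ¬ Sat φ w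
  | .or φ ψ, w => Sat φ w ∨ Sat ψ w
  | .and φ ψ, w => Sat φ w ∧ Sat ψ w
  | .next φ, w => Sat φ (suffix w 1)
  | .untl φ ψ, w => ∃ i, Sat ψ (suffix w i) ∧ ∀ j < i, Sat φ (suffix w j)

/-- Pure eventuality formulae: μ ::= Fφ | μ∨μ | μ∧μ | Xμ | φUμ | μRμ | Gμ. -/
inductive PureEventuality {AP : Type} : LTL AP → Prop
  | fin (φ : LTL AP) : PureEventuality (LTL.F φ)
  | or {μ₁ μ₂ : LTL AP} : PureEventuality μ₁ → PureEventuality μ₂ →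
      PureEventuality (LTL.or μ₁ μ₂)
  | and {μ₁ μ₂ : LTL AP} : PureEventuality μ₁ → PureEventuality μ₂ →
      PureEventuality (LTL.and μ₁ μ₂)
  | next {μ : LTL AP} : PureEventuality μ → PureEventuality (LTL.next μ)
  | untl (φ : LTL AP) {μ : LTL AP} : PureEventuality μ →
      PureEventuality (LTL.untl φ μ)
  | rel {μ₁ μ₂ : LTL AP} : PureEventuality μ₁ → PureEventuality μ₂ →
      PureEventuality (LTL.R μ₁ μ₂)
  | glob {μ : LTL AP} : PureEventuality μ → PureEventuality (LTL.G μ)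

/-- Pure universality formulae: ν ::= Gφ | ν∨ν | ν∧ν | Xν | νUν | φRν | Fν. -/
inductive PureUniversality {AP : Type} : LTL AP → Prop
  | glob (φ : LTL AP) : PureUniversality (LTL.G φ)
  | or {ν₁ ν₂ : LTL AP} : PureUniversality ν₁ → PureUniversality ν₂ →
      PureUniversality (LTL.or ν₁ ν₂)
  | and {ν₁ ν₂ : LTL AP} : PureUniversality ν₁ → PureUniversality ν₂ →
      PureUniversality (LTL.and ν₁ ν₂)
  | next {ν : LTL AP} : PureUniversality ν → PureUniversality (LTL.next ν)
  | untl {ν₁ ν₂ : LTL AP} : PureUniversality ν₁ → PureUniversality ν₂ →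
      PureUniversality (LTL.untl ν₁ ν₂)
  | rel (φ : LTL AP) {ν : LTL AP} : PureUniversality ν →
      PureUniversality (LTL.R φ ν)
  | fin {ν : LTL AP} : PureUniversality ν → PureUniversality (LTL.F ν)

/-- Alternating formulae: ξ ::= Gμ | Fν | ξ∨ξ | ξ∧ξ | Xξ | φUξ | φRξ | Fξ | Gξ. -/
inductive Alternating {AP : Type} : LTL AP → Prop
  | globEv {μ : LTL AP} : PureEventuality μ → Alternating (LTL.G μ)
  | finUniv {ν : LTL AP} : PureUniversality ν → Alternating (LTL.F ν)
  | or {ξ₁ ξ₂ : LTL AP} : Alternating ξ₁ → Alternating ξ₂ →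
      Alternating (LTL.or ξ₁ ξ₂)
  | and {ξ₁ ξ₂ : LTL AP} : Alternating ξ₁ → Alternating ξ₂ →
      Alternating (LTL.and ξ₁ ξ₂)
  | next {ξ : LTL AP} : Alternating ξ → Alternating (LTL.next ξ)
  | untl (φ : LTL AP) {ξ : LTL AP} : Alternating ξ → Alternating (LTL.untl φ ξ)
  | rel (φ : LTL AP) {ξ : LTL AP} : Alternating ξ → Alternating (LTL.R φ ξ)
  | fin {ξ : LTL AP} : Alternating ξ → Alternating (LTL.F ξ)
  | glob {ξ : LTL AP} : Alternating ξ → Alternating (LTL.G ξ)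


section Aux

variable {AP : Type}

lemma suffix_suffix (w : ℕ → Set AP) (k i : ℕ) :
    suffix (suffix w k) i = suffix w (i + k) := by
  funext j; simp only [suffix, Nat.add_assoc]

lemma suffix_add_comm (w : ℕ → Set AP) (i k : ℕ) :
    suffix (suffix w i) k = suffix w (i + k) := by
  rw [suffix_suffix, Nat.add_comm]

lemma sat_F {φ : LTL AP} {w : ℕ → Set AP} :
    Sat (LTL.F φ) w ↔ ∃ i, Sat φ (suffix w i) := by
  simp [LTL.F, Sat]

lemma sat_G {φ : LTL AP} {w : ℕ → Set AP} :
    Sat (LTL.G φ) w ↔ ∀ i, Sat φ (suffix w i) := by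
  simp [LTL.G, LTL.F, Sat]

lemma sat_R {φ ψ : LTL AP} {w : ℕ → Set AP} :
    Sat (LTL.R φ ψ) w ↔ ∀ i, Sat ψ (suffix w i) ∨ ∃ j < i, Sat φ (suffix w j) := by
  simp only [LTL.R, Sat, not_exists, not_and]
  constructor
  · intro h i
    by_cases hψ : Sat ψ (suffix w i)
    · exact Or.inl hψ
    · right
      by_contra hc
      push_neg at hc
      exact h i hψ (fun j hj => hc j hj)
  · rintro h i hψ hφ
    rcases h i with h' | ⟨j, hj, hφj⟩
    · exact hψ h'
    · exact hφ j hj hφj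

lemma pe_ext {μ : LTL AP} (h : PureEventuality μ) :
    ∀ (w : ℕ → Set AP) (k : ℕ), Sat μ (suffix w k) → Sat μ w := by
  induction h with
  | fin φ =>
      intro w k hw
      rw [sat_F] at hw ⊢
      obtain ⟨i, hi⟩ := hw
      rw [suffix_suffix] at hi
      exact ⟨i + k, hi⟩
  | or h1 h2 ih1 ih2 =>
      intro w k hw
      rcases hw with hw | hw
      · exact Or.inl (ih1 w k hw)
      · exact Or.inr (ih2 w k hw)
  | and h1 h2 ih1 ih2 =>
      intro w k hw
      exact ⟨ih1 w k hw.1, ih2 w k hw.2⟩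
  | next h ih =>
      intro w k hw
      show Sat _ (suffix w 1)
      simp only [Sat] at hw
      rw [suffix_suffix, ← suffix_add_comm w 1 k] at hw
      exact ih (suffix w 1) k hw
  | untl φ h ih =>
      intro w k hw
      obtain ⟨i, hμ, -⟩ := hw
      rw [suffix_suffix] at hμ
      exact ⟨0, ih w (i + k) hμ, fun j hj => absurd hj (Nat.not_lt_zero j)⟩
  | rel h1 h2 ih1 ih2 =>
      intro w k hw
      rw [sat_R] at hw ⊢
      intro i
      rcases hw i with h | ⟨j, hj, hφ⟩
      · left
        rw [suffix_suffix, ← suffix_add_comm w i k] at h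
        exact ih2 (suffix w i) k h
      · right
        rw [suffix_suffix, ← suffix_add_comm w j k] at hφ
        exact ⟨j, hj, ih1 (suffix w j) k hφ⟩
  | glob h ih =>
      intro w k hw
      rw [sat_G] at hw ⊢
      intro i
      have hthis := hw i
      rw [suffix_suffix, ← suffix_add_comm w i k] at hthis
      exact ih (suffix w i) k hthis

lemma pu_suffix {ν : LTL AP} (h : PureUniversality ν) :
    ∀ (w : ℕ → Set AP) (k : ℕ), Sat ν w → Sat ν (suffix w k) := by
  induction h with
  | glob φ =>
      intro w k hw
      rw [sat_G] at hw ⊢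
      intro i
      rw [suffix_suffix]
      exact hw (i + k)
  | or h1 h2 ih1 ih2 =>
      intro w k hw
      rcases hw with hw | hw
      · exact Or.inl (ih1 w k hw)
      · exact Or.inr (ih2 w k hw)
  | and h1 h2 ih1 ih2 =>
      intro w k hw
      exact ⟨ih1 w k hw.1, ih2 w k hw.2⟩
  | next h ih =>
      intro w k hw
      have hw' := ih (suffix w 1) k hw
      rw [suffix_add_comm, ← suffix_suffix w k 1] at hw'
      exact hw'
  | untl h1 h2 ih1 ih2 =>
      intro w k hw
      obtain ⟨i, h2', h1'⟩ := hw
      refine ⟨i, ?_, ?_⟩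
      · rw [suffix_suffix, ← suffix_add_comm w i k]
        exact ih2 (suffix w i) k h2'
      · intro j hj
        rw [suffix_suffix, ← suffix_add_comm w j k]
        exact ih1 (suffix w j) k (h1' j hj)
  | rel φ h ih =>
      intro w k hw
      rw [sat_R] at hw ⊢
      rcases hw 0 with h0 | ⟨j, hj, -⟩
      · intro i
        left
        rw [suffix_suffix]
        exact ih w (i + k) h0
      · exact absurd hj (Nat.not_lt_zero j)
  | fin h ih =>
      intro w k hw
      rw [sat_F] at hw ⊢
      obtain ⟨i, hi⟩ := hw
      refine ⟨i, ?_⟩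
      rw [suffix_suffix, ← suffix_add_comm w i k]
      exact ih (suffix w i) k hi

lemma alt_invariant {ξ : LTL AP} (h : Alternating ξ) :
    ∀ (w : ℕ → Set AP) (k : ℕ), Sat ξ (suffix w k) ↔ Sat ξ w := by
  induction h with
  | globEv hμ =>
      intro w k
      rw [sat_G, sat_G]
      constructor
      · intro hw i
        have hthis := hw i
        rw [suffix_suffix, ← suffix_add_comm w i k] at hthis
        exact pe_ext hμ (suffix w i) k hthis
      · intro hw i
        rw [suffix_suffix]
        exact hw (i + k)
  | finUniv hν =>
      intro w k
      rw [sat_F, sat_F]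
      constructor
      · rintro ⟨i, hi⟩
        rw [suffix_suffix] at hi
        exact ⟨i + k, hi⟩
      · rintro ⟨i, hi⟩
        refine ⟨i, ?_⟩
        rw [suffix_suffix, ← suffix_add_comm w i k]
        exact pu_suffix hν (suffix w i) k hi
  | or h1 h2 ih1 ih2 =>
      intro w k
      show _ ∨ _ ↔ _ ∨ _
      rw [ih1 w k, ih2 w k]
  | and h1 h2 ih1 ih2 =>
      intro w k
      show _ ∧ _ ↔ _ ∧ _
      rw [ih1 w k, ih2 w k]
  | next h ih =>
      intro w k
      show Sat _ (suffix (suffix w k) 1) ↔ Sat _ (suffix w 1)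
      rw [suffix_suffix, ih w (1 + k), ih w 1]
  | untl φ h ih =>
      rename_i ξ'
      intro w k
      have key : ∀ v : ℕ → Set AP, Sat (LTL.untl φ ξ') v ↔ Sat ξ' v := by
        intro v
        constructor
        · rintro ⟨i, hi, -⟩
          exact (ih v i).mp hi
        · intro hv
          exact ⟨0, hv, fun j hj => absurd hj (Nat.not_lt_zero j)⟩
      rw [key, key]
      exact ih w k
  | rel φ h ih =>
      rename_i ξ'
      intro w k
      have key : ∀ v : ℕ → Set AP, Sat (LTL.R φ ξ') v ↔ Sat ξ' v := by
        intro v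
        rw [sat_R]
        constructor
        · intro hv
          rcases hv 0 with h0 | ⟨j, hj, -⟩
          · exact h0
          · exact absurd hj (Nat.not_lt_zero j)
        · intro hv i
          exact Or.inl ((ih v i).mpr hv)
      rw [key, key]
      exact ih w k
  | fin h ih =>
      rename_i ξ'
      intro w k
      have key : ∀ v : ℕ → Set AP, Sat (LTL.F ξ') v ↔ Sat ξ' v := by
        intro v
        rw [sat_F]
        constructor
        · rintro ⟨i, hi⟩
          exact (ih v i).mp hi
        · intro hv
          exact ⟨0, hv⟩
      rw [key, key]
      exact ih w k
  | glob h ih =>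
      rename_i ξ'
      intro w k
      have key : ∀ v : ℕ → Set AP, Sat (LTL.G ξ') v ↔ Sat ξ' v := by
        intro v
        rw [sat_G]
        constructor
        · intro hv
          exact (ih v 0).mp (hv 0)
        · intro hv i
          exact (ih v i).mpr hv
      rw [key, key]
      exact ih w k

end Aux

theorem release_release_alternating_equiv :
    ∀ (AP : Type) (φ ψ : LTL AP),
      (∀ w : ℕ → Set AP, Sat φ w → Sat ψ w) →
      ∀ (γ : LTL AP), Alternating γ →
        ∀ (w : ℕ → Set AP),
          Sat (LTL.R (LTL.R ψ γ) φ) w ↔ Sat (LTL.R γ φ) w := by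
  intro AP φ ψ himp γ hγ w
  have hinv := alt_invariant hγ
  rw [sat_R, sat_R]
  by_cases hg : Sat γ w
  · constructor
    · intro h i
      rcases Nat.eq_zero_or_pos i with rfl | hi
      · rcases h 0 with h0 | ⟨j, hj, -⟩
        · exact Or.inl h0
        · exact absurd hj (Nat.not_lt_zero j)
      · exact Or.inr ⟨0, hi, (hinv w 0).mpr hg⟩
    · intro h i
      rcases Nat.eq_zero_or_pos i with rfl | hi
      · rcases h 0 with h0 | ⟨j, hj, -⟩
        · exact Or.inl h0
        · exact absurd hj (Nat.not_lt_zero j)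
      · refine Or.inr ⟨0, hi, ?_⟩
        rw [sat_R]
        intro i'
        left
        rw [suffix_suffix]
        exact (hinv w (i' + 0)).mpr hg
  · constructor
    · intro h i
      left
      rcases h i with h0 | ⟨j, hj, hR⟩
      · exact h0
      · exfalso
        rw [sat_R] at hR
        rcases hR 0 with h0 | ⟨j', hj', -⟩
        · rw [suffix_suffix] at h0
          exact hg ((hinv w (0 + j)).mp h0)
        · exact absurd hj' (Nat.not_lt_zero j')
    · intro h i
      left
      rcases h i with h0 | ⟨j, hj, hγj⟩
      · exact h0
      · exact absurd ((hinv w j).mp hγj) hg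
end

section
/- Let φ, ψ, ρ be LTL formulae such that φ implies ψ (for every alphabet Σ and every w ∈ Σ^ω, w ⊨ φ implies w ⊨ ψ), and let γ be an alternating LTL formula. Then φ U (γ R (ψ U ρ)) ≡ γ R (ψ U ρ), i.e., for every alphabet Σ and every infinite word w ∈ Σ^ω, w ⊨ φ U (γ R (ψ U ρ)) if and only if w ⊨ γ R (ψ U ρ). -/
lemma suffix_zero {AP : Type} (w : ℕ → Set AP) : suffix w 0 = w := by
  funext i; simp [suffix]

lemma suffix_add {AP : Type} (w : ℕ → Set AP) (i m : ℕ) :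
    suffix (suffix w i) m = suffix w (i + m) := by
  funext j; simp only [suffix]; exact congrArg w (by omega)

lemma relSat {AP : Type} (γ θ : LTL AP) (w : ℕ → Set AP) :
    Sat (LTL.R γ θ) w ↔
      ∀ i, Sat θ (suffix w i) ∨ ∃ j < i, Sat γ (suffix w j) := by
  show (¬ ∃ i, (¬ Sat θ (suffix w i)) ∧ ∀ j < i, ¬ Sat γ (suffix w j)) ↔ _
  push_neg
  constructor
  · intro h i
    by_cases hθ : Sat θ (suffix w i)
    · exact Or.inl hθ
    · exact Or.inr (h i hθ)
  · intro h i hθ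
    rcases h i with h' | h'
    · exact absurd h' hθ
    · exact h'

theorem until_release_until_alternating_equiv :
    ∀ (AP : Type) (φ ψ ρ : LTL AP),
      (∀ w : ℕ → Set AP, Sat φ w → Sat ψ w) →
      ∀ (γ : LTL AP), Alternating γ →
        ∀ (w : ℕ → Set AP),
          Sat (LTL.untl φ (LTL.R γ (LTL.untl ψ ρ))) w ↔
            Sat (LTL.R γ (LTL.untl ψ ρ)) w := by
  intro AP φ ψ ρ himp γ _hγ w
  constructor
  · rintro ⟨i, hrel, hpre⟩
    rw [relSat] at hrel ⊢
    have hθi : Sat (LTL.untl ψ ρ) (suffix w i) := by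
      rcases hrel 0 with h | ⟨j, hj, _⟩
      · rwa [suffix_add, Nat.add_zero] at h
      · omega
    intro n
    by_cases hin : i ≤ n
    · rcases hrel (n - i) with h | ⟨j, hj, hγ⟩
      · left; rwa [suffix_add, Nat.add_sub_cancel' hin] at h
      · right; refine ⟨i + j, by omega, ?_⟩
        rwa [suffix_add] at hγ
    · left
      obtain ⟨k, hρ, hψ⟩ := hθi
      refine ⟨(i - n) + k, ?_, ?_⟩
      · rw [suffix_add] at hρ ⊢
        have : n + ((i - n) + k) = i + k := by omega
        rwa [this]
      · intro j hj
        by_cases hji : j < i - n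
        · have := himp _ (hpre (n + j) (by omega))
          rw [suffix_add]
          exact this
        · have := hψ (j - (i - n)) (by omega)
          rw [suffix_add] at this ⊢
          have e : i + (j - (i - n)) = n + j := by omega
          rwa [e] at this
  · intro h
    exact ⟨0, by rwa [suffix_zero], fun j hj => absurd hj (Nat.not_lt_zero j)⟩
end
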